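/- If D is an orientation of a complete graph (a tournament) on n vertices whose Hermitian adjacency matrix H_{π/3}(D) has symmetric spectrum, then Σᵢ C(dᵢ⁺, 2) = (2/3)·C(n,3), where dᵢ⁺ is the out-degree of vertex i. -/

import Mathlib

/-!
Write `H = ω A + ω̄ Aᵀ`, where `A` is the 0/1 arc matrix and `ω = e^{iπ/3}`. Cyclicity of the trace
gives `tr (a A + b Aᵀ)³ = (a³ + b³) tr A³ + 3ab(a + b) t` with `t = tr (A A Aᵀ)`, and `t` counts
the transitive triangles, i.e. `t = ∑ C(d⁺ᵤ, 2)`. For `(a, b) = (ω, ω̄)` this is `-2 tr A³ + 3t`,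
which vanishes because a symmetric spectrum has `∑ λᵢ³ = 0`. For `(a, b) = (1, 1)`, since
`A + Aᵀ = J - I` in a tournament, it is `n(n-1)(n-2) = 2 tr A³ + 6t`. Adding, `9t = 6 C(n, 3)`.
-/

open Matrix

namespace Matrix

variable {ι R : Type*} [Fintype ι]

theorem trace_mul_transpose_mul_transpose [CommSemiring R] (A : Matrix ι ι R) :
    (A * Aᵀ * Aᵀ).trace = (A * A * Aᵀ).trace := by
  rw [← trace_transpose]; simp [transpose_mul, Matrix.mul_assoc]

theorem trace_smul_add_smul_transpose_pow_three [CommRing R] [DecidableEq ι] (a b : R)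
    (A : Matrix ι ι R) :
    ((a • A + b • Aᵀ) ^ 3).trace
      = (a ^ 3 + b ^ 3) * (A ^ 3).trace + 3 * a * b * (a + b) * (A * A * Aᵀ).trace := by
  have h₁ : (A * Aᵀ * A).trace = (A * A * Aᵀ).trace := by
    rw [trace_mul_cycle, Matrix.mul_assoc]
  have h₂ : (Aᵀ * A * A).trace = (A * A * Aᵀ).trace := by
    rw [trace_mul_cycle, h₁]
  have h₃ := trace_mul_transpose_mul_transpose A
  have h₄ : (Aᵀ * Aᵀ * A).trace = (A * A * Aᵀ).trace := by
    rw [trace_mul_cycle, h₃]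
  have h₅ : (Aᵀ * A * Aᵀ).trace = (A * A * Aᵀ).trace := by
    rw [trace_mul_cycle, h₄]
  have h₆ : (Aᵀ * Aᵀ * Aᵀ).trace = (A ^ 3).trace := by
    rw [← trace_transpose, pow_three]; simp [transpose_mul, Matrix.mul_assoc]
  simp only [pow_three, Matrix.add_mul, Matrix.mul_add, Matrix.smul_mul, Matrix.mul_smul,
    trace_add, trace_smul, ← Matrix.mul_assoc, h₁, h₂, h₃, h₄, h₅, h₆, smul_eq_mul]
  ring

theorem IsHermitian.trace_pow_eq_sum_eigenvalues_pow {𝕜 : Type*} [RCLike 𝕜] [DecidableEq ι]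
    {A : Matrix ι ι 𝕜} (hA : A.IsHermitian) (k : ℕ) :
    (A ^ k).trace = ∑ i, (hA.eigenvalues i : 𝕜) ^ k := by
  conv_lhs => rw [hA.spectral_theorem, ← map_pow, Unitary.conjStarAlgAut_apply, trace_mul_cycle,
    Unitary.coe_star_mul_self, Matrix.one_mul, diagonal_pow, trace_diagonal]
  simp

theorem trace_ones_sub_one_pow_three [CommRing R] [DecidableEq ι] :
    (((of fun _ _ => (1 : R)) - 1 : Matrix ι ι R) ^ 3).trace
      = Fintype.card ι * (Fintype.card ι - 1) * (Fintype.card ι - 2) := by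
  set J : Matrix ι ι R := of fun _ _ => 1
  have hJ : J * J = (Fintype.card ι : R) • J := by
    ext; simp [J, mul_apply]
  have : (J - 1) ^ 3 = J * J * J - 3 • (J * J) + 3 • J - 1 := by noncomm_ring
  have hJ3 : J * J * J = ((Fintype.card ι : R) ^ 2) • J := by
    rw [hJ, Matrix.smul_mul, hJ, smul_smul, sq]
  have htrJ : J.trace = Fintype.card ι := by simp [J, trace]
  rw [this, hJ3, hJ]
  simp only [trace_sub, trace_add, trace_smul, htrJ, trace_one]
  simp only [smul_eq_mul, nsmul_eq_mul]
  ring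

end Matrix

theorem Fintype.sum_pow_eq_zero_of_odd {ι R : Type*} [Fintype ι] [CommRing R] [NoZeroDivisors R]
    [CharZero R] (f : ι → R) (σ : Equiv.Perm ι) (hσ : ∀ i, f (σ i) = -f i) {k : ℕ}
    (hk : Odd k) : ∑ i, f i ^ k = 0 := by
  refine self_eq_neg.mp ?_
  conv_lhs => rw [← Equiv.sum_comp σ]
  rw [← Finset.sum_neg_distrib]
  simp only [hσ, hk.neg_pow]

theorem Nat.cast_descFactorial_three {S : Type*} [CommRing S] (n : ℕ) :
    (n.descFactorial 3 : S) = n * (n - 1) * (n - 2) := by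
  rcases n with _ | _ | _ | m <;> simp [Nat.descFactorial_succ]
  ring

open Complex in
theorem Complex.exp_pi_div_three_mul_I_pow_three_add :
    exp ((Real.pi / 3 : ℝ) * I) ^ 3 + exp (-((Real.pi / 3 : ℝ) * I)) ^ 3 = -2 := by
  have h : ((3 : ℕ) : ℂ) * ((Real.pi / 3 : ℝ) * I) = Real.pi * I := by push_cast; ring
  rw [← exp_nat_mul, ← exp_nat_mul, mul_neg, h, exp_neg, exp_pi_mul_I]
  norm_num

open Complex in
theorem Complex.exp_pi_div_three_mul_I_mul_add :
    exp ((Real.pi / 3 : ℝ) * I) * exp (-((Real.pi / 3 : ℝ) * I))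
      * (exp ((Real.pi / 3 : ℝ) * I) + exp (-((Real.pi / 3 : ℝ) * I))) = 1 := by
  rw [← exp_add, add_neg_cancel, exp_zero, one_mul, ← neg_mul, ← two_cos, ← ofReal_cos,
    Real.cos_pi_div_three]
  norm_num

section Tournament

variable {V : Type*} (arc : V → V → Prop) [DecidableRel arc] (R : Type*)

def arcMatrix [Zero R] [One R] : Matrix V V R := of fun u v => if arc u v then 1 else 0

variable {arc R}

theorem arcMatrix_add_transpose_add_one [NonAssocSemiring R] [DecidableEq V]
    (hasym : ∀ u v, arc u v → ¬ arc v u) (htour : ∀ u v, u ≠ v → arc u v ∨ arc v u) :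
    arcMatrix arc R + (arcMatrix arc R)ᵀ + 1 = of fun _ _ => 1 := by
  ext u v
  by_cases huv : u = v
  · have hirr : ¬ arc v v := fun h => hasym v v h h
    simp [arcMatrix, huv, hirr]
  · rcases htour u v huv with h | h <;> simp [arcMatrix, huv, h, hasym _ _ h]

variable [Fintype V]

variable (arc) in
def outDegree (u : V) : ℕ := (Finset.univ.filter (arc u)).card

theorem trace_arcMatrix_add_transpose_pow_three [CommRing R] [DecidableEq V]
    (hasym : ∀ u v, arc u v → ¬ arc v u) (htour : ∀ u v, u ≠ v → arc u v ∨ arc v u) :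
    ((arcMatrix arc R + (arcMatrix arc R)ᵀ) ^ 3).trace = (Fintype.card V).descFactorial 3 := by
  rw [eq_sub_of_add_eq (arcMatrix_add_transpose_add_one (R := R) hasym htour),
    trace_ones_sub_one_pow_three, Nat.cast_descFactorial_three]

theorem trace_arcMatrix_mul_transpose [NonAssocSemiring R] :
    (arcMatrix arc R * (arcMatrix arc R)ᵀ).trace = ∑ u, (outDegree arc u : R) := by
  simp +contextual [trace, mul_apply, arcMatrix, outDegree, Finset.sum_boole]

theorem trace_arcMatrix_mul_ones_mul_transpose [CommSemiring R] :
    (arcMatrix arc R * (of fun _ _ => 1) * (arcMatrix arc R)ᵀ).trace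
      = ∑ u, (outDegree arc u : R) ^ 2 := by
  simp [trace, mul_apply, arcMatrix, outDegree, Finset.sum_ite, sq]

theorem trace_arcMatrix_mul_mul_transpose [Field R] [NeZero (2 : R)] [DecidableEq V]
    (hasym : ∀ u v, arc u v → ¬ arc v u) (htour : ∀ u v, u ≠ v → arc u v ∨ arc v u) :
    (arcMatrix arc R * arcMatrix arc R * (arcMatrix arc R)ᵀ).trace
      = ∑ u, ((outDegree arc u).choose 2 : R) := by
  set A := arcMatrix arc R
  have key : 2 * (A * A * Aᵀ).trace + ∑ u, (outDegree arc u : R)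
      = ∑ u, (outDegree arc u : R) ^ 2 := by
    rw [← trace_arcMatrix_mul_ones_mul_transpose, ← arcMatrix_add_transpose_add_one hasym htour,
      ← trace_arcMatrix_mul_transpose]
    simp only [Matrix.mul_add, Matrix.add_mul, Matrix.mul_one, trace_add,
      trace_mul_transpose_mul_transpose]
    ring
  calc (A * A * Aᵀ).trace
      = (∑ u, (outDegree arc u : R) ^ 2 - ∑ u, (outDegree arc u : R)) / 2 := by
        rw [eq_div_iff two_ne_zero]; linear_combination key
    _ = ∑ u, ((outDegree arc u).choose 2 : R) := by
        simp only [Nat.cast_choose_two, ← Finset.sum_sub_distrib, Finset.sum_div]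
        congr! 2 with u
        ring

end Tournament

/-- If a tournament on `n` vertices has `H_{π/3}` with symmetric spectrum, then
`∑ i, C(d⁺ i, 2) = (2/3) * C(n, 3)` where `d⁺ i` is the out-degree of `i`. -/
theorem stmt_7 (n : ℕ) (arc : Fin n → Fin n → Prop) [DecidableRel arc]
    (hasym : ∀ u v, arc u v → ¬ arc v u)
    (htour : ∀ u v, u ≠ v → arc u v ∨ arc v u)
    (H : Matrix (Fin n) (Fin n) ℂ)
    (hH : ∀ u v, H u v =
      if arc u v then Complex.exp ((Real.pi / 3 : ℝ) * Complex.I)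
      else if arc v u then Complex.exp (-((Real.pi / 3 : ℝ) * Complex.I)) else 0)
    (hHerm : H.IsHermitian)
    (hsym : ∃ σ : Equiv.Perm (Fin n), ∀ i, hHerm.eigenvalues (σ i) = - hHerm.eigenvalues i) :
    (∑ i : Fin n, ((Finset.univ.filter (fun j => arc i j)).card.choose 2 : ℚ))
      = (2 / 3 : ℚ) * (n.choose 3 : ℚ) := by
  set A := arcMatrix arc ℂ
  have hHA : H = Complex.exp ((Real.pi / 3 : ℝ) * Complex.I) • A
      + Complex.exp (-((Real.pi / 3 : ℝ) * Complex.I)) • Aᵀ := by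
    ext u v
    by_cases h : arc u v
    · simp [hH, A, arcMatrix, h, hasym u v h]
    · by_cases h' : arc v u <;> simp [hH, A, arcMatrix, h, h']
  have hspec : (H ^ 3).trace = 0 := by
    obtain ⟨σ, hσ⟩ := hsym
    rw [hHerm.trace_pow_eq_sum_eigenvalues_pow]
    exact Fintype.sum_pow_eq_zero_of_odd _ σ (by simp [hσ]) (by decide)
  rw [hHA, trace_smul_add_smul_transpose_pow_three, Complex.exp_pi_div_three_mul_I_pow_three_add]
    at hspec
  have hcount := trace_smul_add_smul_transpose_pow_three (1 : ℂ) 1 A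
  rw [one_smul, one_smul, trace_arcMatrix_add_transpose_pow_three hasym htour,
    Fintype.card_fin] at hcount
  have h9 : 9 * (A * A * Aᵀ).trace = n.descFactorial 3 := by
    linear_combination
      hspec - hcount - 3 * (A * A * Aᵀ).trace * Complex.exp_pi_div_three_mul_I_mul_add
  rw [trace_arcMatrix_mul_mul_transpose hasym htour, Nat.descFactorial_eq_factorial_mul_choose] at h9
  change ∑ i, ((outDegree arc i).choose 2 : ℚ) = _
  push_cast [Nat.factorial] at h9
  have h9ℚ : 9 * ∑ i, ((outDegree arc i).choose 2 : ℚ) = 6 * n.choose 3 := by exact_mod_cast h9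
  linarith
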